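/- The function g(c) = Γ(1 − 2/c)/Γ(1 − 1/c)² − 1 is strictly decreasing in c on (2, ∞) and tends to 0 as c → ∞. -/

import Mathlib

/-!
`log Γ` is strictly convex on `(0, ∞)`: it is the convex `x ↦ log Γ(x + 1)` plus the strictly
convex `-log x`. With `t = 1/c`, `log (g(c) + 1) = log Γ(1 - 2t) - 2 log Γ(1 - t)`. For `t₁ < t₂`
the increment of this quantity is a difference of secant slopes of `log Γ` over
`[1 - 2t₂, 1 - 2t₁]` and `[1 - t₂, 1 - t₁]`, the second interval lying to the right of the first
and half as long, so strict convexity makes `g` increase in `t`, i.e. decrease in `c`.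
The limit follows from continuity of `Γ` at `1`, where `Γ(1) = 1`.
-/

open Filter Topology Set Real

theorem StrictConvexOn.slope_lt_slope {𝕜 : Type*} [Field 𝕜] [LinearOrder 𝕜]
    [IsStrictOrderedRing 𝕜] {s : Set 𝕜} {f : 𝕜 → 𝕜} (hf : StrictConvexOn 𝕜 s f) {a b c d : 𝕜}
    (ha : a ∈ s) (hc : c ∈ s) (hd : d ∈ s) (hab : a < b) (hac : a < c) (hbd : b < d)
    (hcd : c < d) :
    (f b - f a) / (b - a) < (f d - f c) / (d - c) :=
  calc (f b - f a) / (b - a) < (f d - f a) / (d - a) :=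
        hf.secant_strict_mono ha (hf.1.ordConnected.out ha hd ⟨hab.le, hbd.le⟩) hd hab.ne'
          (hab.trans hbd).ne' hbd
    _ = (f a - f d) / (a - d) := by rw [← neg_div_neg_eq, neg_sub, neg_sub]
    _ < (f c - f d) / (c - d) := hf.secant_strict_mono hd ha hc (hab.trans hbd).ne hcd.ne hac
    _ = (f d - f c) / (d - c) := by rw [← neg_div_neg_eq, neg_sub, neg_sub]

theorem StrictConvexOn.strictMonoOn_sub_two_mul {𝕜 : Type*} [Field 𝕜] [LinearOrder 𝕜]
    [IsStrictOrderedRing 𝕜] {f : 𝕜 → 𝕜} (hf : StrictConvexOn 𝕜 (Ioi 0) f) (x : 𝕜) :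
    StrictMonoOn (fun t => f (x - 2 * t) - 2 * f (x - t)) (Ioo 0 (x / 2)) := by
  rintro t₁ ⟨ht₁, -⟩ t₂ ⟨-, ht₂⟩ hlt
  have hslope := hf.slope_lt_slope (a := x - 2 * t₂) (b := x - 2 * t₁) (c := x - t₂)
    (d := x - t₁) (by simp only [mem_Ioi]; linarith) (by simp only [mem_Ioi]; linarith)
    (by simp only [mem_Ioi]; linarith) (by linarith) (by linarith) (by linarith) (by linarith)
  rw [show x - 2 * t₁ - (x - 2 * t₂) = 2 * (t₂ - t₁) by ring,
    show x - t₁ - (x - t₂) = t₂ - t₁ by ring, ← div_div,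
    div_lt_div_iff_of_pos_right (sub_pos.2 hlt)] at hslope
  simp only
  linarith

theorem Real.strictConvexOn_log_Gamma : StrictConvexOn ℝ (Ioi 0) (log ∘ Gamma) := by
  have hshift : ConvexOn ℝ (Ioi 0) ((log ∘ Gamma) ∘ fun x => 1 + x) :=
    (convexOn_log_Gamma.translate_right 1).subset (fun x (hx : 0 < x) => by
      simp only [mem_preimage, mem_Ioi]; linarith) (convex_Ioi 0)
  refine (hshift.add_strictConvexOn strictConcaveOn_log_Ioi.neg).congr fun x (hx : 0 < x) => ?_
  simp only [Pi.add_apply, Pi.neg_apply, Function.comp_apply, add_comm 1 x, Gamma_add_one hx.ne',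
    log_mul hx.ne' (Gamma_pos_of_pos hx).ne']
  ring

theorem Real.Gamma_div_Gamma_sq_eq_exp {x y : ℝ} (hx : 0 < x) (hy : 0 < y) :
    Gamma x / Gamma y ^ 2 = exp (log (Gamma x) - 2 * log (Gamma y)) := by
  rw [exp_sub, two_mul, exp_add, exp_log (Gamma_pos_of_pos hx), exp_log (Gamma_pos_of_pos hy), sq]

theorem Real.tendsto_Gamma_one_sub_div_atTop (k : ℝ) :
    Tendsto (fun c : ℝ => Gamma (1 - k / c)) atTop (𝓝 1) := by
  have hcont : ContinuousAt Gamma 1 :=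
    (differentiableAt_Gamma (s := 1) fun m => by
      linarith [(m.cast_nonneg : (0 : ℝ) ≤ m)]).continuousAt
  have harg : Tendsto (fun c : ℝ => 1 - k / c) atTop (𝓝 1) := by
    simpa using tendsto_const_nhds.sub (tendsto_const_nhds.div_atTop (tendsto_id (α := ℝ)))
  simpa only [Gamma_one, Function.comp_def] using hcont.tendsto.comp harg

/-- `g(c) = Γ(1 − 2/c)/Γ(1 − 1/c)² − 1` is strictly decreasing on `(2, ∞)` and tends
to `0` as `c → ∞`. -/
theorem iw_cv_strictAnti_tendsto_zero :
    StrictAntiOn (fun c : ℝ => Real.Gamma (1 - 2 / c) / (Real.Gamma (1 - 1 / c)) ^ 2 - 1)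
        (Set.Ioi (2 : ℝ)) ∧
      Tendsto (fun c : ℝ => Real.Gamma (1 - 2 / c) / (Real.Gamma (1 - 1 / c)) ^ 2 - 1)
        atTop (𝓝 0) := by
  constructor
  · have hinv : ∀ c ∈ Ioi (2 : ℝ), 1 / c ∈ Ioo 0 (1 / 2) := fun c (hc : 2 < c) =>
      ⟨by positivity, one_div_lt_one_div_of_lt two_pos hc⟩
    have hpos : ∀ c ∈ Ioi (2 : ℝ), 0 < 1 - 2 / c ∧ 0 < 1 - 1 / c := fun c hc => by
      have := hinv c hc
      simp only [mem_Ioo, ← mul_one_div 2 c] at this ⊢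
      constructor <;> linarith
    intro c₁ hc₁ c₂ hc₂ hlt
    have hmono := strictConvexOn_log_Gamma.strictMonoOn_sub_two_mul 1 (hinv c₂ hc₂) (hinv c₁ hc₁)
      (one_div_lt_one_div_of_lt (by linarith [mem_Ioi.1 hc₁]) hlt)
    simp only [Function.comp_apply, mul_one_div] at hmono
    simp only [sub_lt_sub_iff_right]
    rw [Gamma_div_Gamma_sq_eq_exp (hpos c₁ hc₁).1 (hpos c₁ hc₁).2,
      Gamma_div_Gamma_sq_eq_exp (hpos c₂ hc₂).1 (hpos c₂ hc₂).2]
    exact exp_lt_exp.2 hmono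
  · simpa using ((tendsto_Gamma_one_sub_div_atTop 2).div
      ((tendsto_Gamma_one_sub_div_atTop 1).pow 2) (by norm_num)).sub_const 1
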